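/- Let p̂(X) ∈ F[X] be any polynomial with Σ_{x ∈ H} p̂(x) = 0, and let c₀, c₁ ∈ F be arbitrary. Then there exist polynomials U(X) ∈ F[X] of degree strictly less than n and h(X) ∈ F[X] such that, setting Û(X) = U(X) + (c₀ + c₁·X)·(X^n − 1), one has the polynomial identity Û(g·X) − Û(X) = p̂(X) + h(X)·(X^n − 1). -/

import Mathlib

open Polynomial Finset

/-!
Reduce `p̂` modulo `X ^ n - 1` to `r` of degree `< n`. Substituting `g X` for `X` multiplies
`X ^ k` by `g ^ k` and fixes `X ^ n - 1`, so on polynomials of degree `< n` the map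
`U ↦ U(g X) - U` scales the coefficient of `X ^ k` by `g ^ k - 1`, which is nonzero except for
`k = 0`. Hence it suffices that `r` has no constant term, and this is the hypothesis on `p̂`:
summing `X ^ k` over `H` gives `n` for `k = 0` and `0` for `0 < k < n`, so
`∑_{x ∈ H} p̂(x) = ∑_{x ∈ H} r(x) = n · r(0)`. The part `(c₀ + c₁ X)(X ^ n - 1)` of `Û` only
contributes a multiple of `X ^ n - 1`.
-/

theorem X_pow_sub_one_comp_C_mul_X {R : Type*} [CommRing R] {g : R} {n : ℕ} (hg : g ^ n = 1) :
    (X ^ n - 1 : R[X]).comp (C g * X) = X ^ n - 1 := by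
  rw [sub_comp, one_comp, pow_comp, X_comp, mul_pow, ← C_pow, hg, C_1, one_mul]

theorem natDegree_modByMonic_X_pow_sub_one_lt {R : Type*} [CommRing R] [Nontrivial R] {n : ℕ}
    (hn : n ≠ 0) (p : R[X]) : (p %ₘ (X ^ n - 1)).natDegree < n := by
  have hmonic : (X ^ n - 1 : R[X]).Monic := by simpa using monic_X_pow_sub_C (1 : R) hn
  have hdeg : (X ^ n - 1 : R[X]).natDegree = n := by
    simpa using natDegree_X_pow_sub_C (n := n) (r := (1 : R))
  exact (natDegree_modByMonic_lt p hmonic fun h =>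
    not_isUnit_X_pow_sub_one R n (by rw [h]; exact isUnit_one)).trans_eq hdeg

theorem exists_comp_C_mul_X_sub_self_eq {F : Type*} [Field F] (g : F) (r : F[X])
    (hr : ∀ k, g ^ k = 1 → r.coeff k = 0) :
    ∃ U : F[X], U.degree ≤ r.degree ∧ U.comp (C g * X) - U = r := by
  -- Where `g ^ k = 1` this divides by zero, harmlessly since then `r.coeff k = 0`.
  set U : F[X] := ∑ k ∈ r.support, monomial k (r.coeff k / (g ^ k - 1))
  have hU : ∀ k, U.coeff k = r.coeff k / (g ^ k - 1) := by
    intro k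
    by_cases hk : k ∈ r.support
    · simp [U, coeff_monomial, hk]
    · simp [U, coeff_monomial, hk, notMem_support_iff.mp hk]
  refine ⟨U, (degree_le_iff_coeff_zero _ _).2 fun k hk => ?_, ?_⟩
  · rw [hU, coeff_eq_zero_of_degree_lt hk, zero_div]
  ext k
  rw [coeff_sub, comp_C_mul_X_coeff, hU, ← mul_sub_one]
  by_cases hgk : g ^ k = 1
  · simp [hr k hgk]
  · exact div_mul_cancel₀ _ (sub_ne_zero.2 hgk)

namespace IsPrimitiveRoot

variable {R : Type*} [CommRing R] [IsDomain R] {g : R} {n : ℕ}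

theorem geom_sum_pow_eq_zero (hg : IsPrimitiveRoot g n) {k : ℕ} (hk : ¬n ∣ k) :
    ∑ i ∈ range n, (g ^ k) ^ i = 0 := by
  refine eq_zero_of_ne_zero_of_mul_left_eq_zero
    (sub_ne_zero_of_ne fun h => hk ((hg.pow_eq_one_iff_dvd k).mp h.symm)) ?_
  rw [mul_neg_geom_sum, pow_right_comm, hg.pow_eq_one, one_pow, sub_self]

theorem sum_eval_pow_eq_mul_coeff_zero (hg : IsPrimitiveRoot g n) {r : R[X]}
    (hr : r.natDegree < n) : ∑ i ∈ range n, r.eval (g ^ i) = n * r.coeff 0 := by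
  have hn : 0 < n := (Nat.zero_le _).trans_lt hr
  calc ∑ i ∈ range n, r.eval (g ^ i)
      = ∑ k ∈ range n, r.coeff k * ∑ i ∈ range n, (g ^ k) ^ i := by
        simp_rw [eval_eq_sum_range' hr, mul_sum]
        exact sum_comm.trans (sum_congr rfl fun k _ => sum_congr rfl fun i _ => by
          rw [pow_right_comm])
    _ = r.coeff 0 * ∑ i ∈ range n, (g ^ 0) ^ i :=
        sum_eq_single_of_mem 0 (mem_range.2 hn) fun k hk hk0 => by
          rw [hg.geom_sum_pow_eq_zero (Nat.not_dvd_of_pos_of_lt (Nat.pos_of_ne_zero hk0)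
            (mem_range.1 hk)), mul_zero]
    _ = n * r.coeff 0 := by simp [mul_comm]

theorem sum_eval_pow_eq_mul_coeff_zero_modByMonic (hg : IsPrimitiveRoot g n) (hn : n ≠ 0)
    (p : R[X]) : ∑ i ∈ range n, p.eval (g ^ i) = n * (p %ₘ (X ^ n - 1)).coeff 0 := by
  have hroot : ∀ i, (X ^ n - 1 : R[X]).eval (g ^ i) = 0 := fun i => by
    rw [eval_sub, eval_pow, eval_X, eval_one, pow_right_comm, hg.pow_eq_one, one_pow, sub_self]
  rw [← hg.sum_eval_pow_eq_mul_coeff_zero]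
  · exact sum_congr rfl fun i _ => by simp [modByMonic_eq_sub_mul_div, hroot i]
  · exact natDegree_modByMonic_X_pow_sub_one_lt hn p

theorem coeff_modByMonic_eq_zero_of_pow_eq_one (hg : IsPrimitiveRoot g n) (hn : (n : R) ≠ 0)
    {p : R[X]} (hp : ∑ i ∈ range n, p.eval (g ^ i) = 0) {k : ℕ} (hk : g ^ k = 1) :
    (p %ₘ (X ^ n - 1)).coeff k = 0 := by
  have hn0 : n ≠ 0 := by rintro rfl; exact hn Nat.cast_zero
  obtain rfl | hk0 := eq_or_ne k 0
  · rw [hg.sum_eval_pow_eq_mul_coeff_zero_modByMonic hn0] at hp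
    exact (mul_eq_zero.1 hp).resolve_left hn
  · exact coeff_eq_zero_of_natDegree_lt ((natDegree_modByMonic_X_pow_sub_one_lt hn0 p).trans_le
      (Nat.le_of_dvd (Nat.pos_of_ne_zero hk0) ((hg.pow_eq_one_iff_dvd k).1 hk)))

end IsPrimitiveRoot

theorem randomized_coboundary_witness_general {F : Type*} [Field F] (n : ℕ)
    (hn : (n : F) ≠ 0) (g : F) (hg : IsPrimitiveRoot g n)
    (p : F[X]) (hp : (∑ i ∈ Finset.range n, p.eval (g ^ i)) = 0) (c₀ c₁ : F) :
    ∃ U h : F[X], U.degree < n ∧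
      (U + (C c₀ + C c₁ * X) * (X ^ n - 1)).comp (C g * X)
          - (U + (C c₀ + C c₁ * X) * (X ^ n - 1)) =
        p + h * (X ^ n - 1) := by
  have hn0 : n ≠ 0 := by rintro rfl; exact hn Nat.cast_zero
  obtain ⟨U, hU_deg, hU⟩ := exists_comp_C_mul_X_sub_self_eq g (p %ₘ (X ^ n - 1))
    fun k => hg.coeff_modByMonic_eq_zero_of_pow_eq_one hn hp
  set B : F[X] := C c₀ + C c₁ * X
  refine ⟨U, B.comp (C g * X) - B - p /ₘ (X ^ n - 1), hU_deg.trans_lt ?_, ?_⟩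
  · exact degree_le_natDegree.trans_lt
      (WithBot.coe_lt_coe.2 (natDegree_modByMonic_X_pow_sub_one_lt hn0 p))
  rw [add_comp, mul_comp, X_pow_sub_one_comp_C_mul_X hg.pow_eq_one]
  linear_combination hU + modByMonic_add_div p (X ^ n - 1)

/-- **Existence of the randomized coboundary witness.**
Let `p̂(X)` be any polynomial with `∑_{x ∈ H} p̂(x) = 0` and `c₀, c₁ ∈ F` arbitrary. Then
there exist polynomials `U(X)` of degree `< n` and `h(X)` such that, setting
`Û(X) = U(X) + (c₀ + c₁·X)·(X^n - 1)`, one has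
`Û(g·X) - Û(X) = p̂(X) + h(X)·(X^n - 1)`.
Here `H = {g^0, …, g^(n-1)}` for a primitive `n`-th root of unity `g` in a field `F` in
which `n` is nonzero. -/
theorem randomized_coboundary_witness {F : Type*} [Field F] (n : ℕ) (hn0 : 0 < n)
    (hn : (n : F) ≠ 0) (g : F) (hg : IsPrimitiveRoot g n)
    (p : F[X]) (hp : (∑ i ∈ Finset.range n, p.eval (g ^ i)) = 0) (c₀ c₁ : F) :
    ∃ U h : F[X], U.degree < n ∧
      (U + (C c₀ + C c₁ * X) * (X ^ n - 1)).comp (C g * X)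
          - (U + (C c₀ + C c₁ * X) * (X ^ n - 1)) =
        p + h * (X ^ n - 1) :=
  randomized_coboundary_witness_general n hn g hg p hp c₀ c₁
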